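/- Let PM : ℝ^d × ℝ^d → ℝ^{2d} be the Prony mapping, PM(A, X) = (m_0(F_{A,X}), ..., m_{2d−1}(F_{A,X})) with m_k(F_{A,X}) = ∑_{j=1}^d a_j x_j^k. For every 0 < m ≤ M, d ≥ 1, ρ > 0, there exist positive constants C_5, C_6, C_7 depending only on m, M, d, ρ with the following properties at every point (A^0, X^0) with nodes X^0 ⊂ [−1/2, 1/2] pairwise separated by at least ρ and amplitudes satisfying m ≤ |a^0_j| ≤ M: (1) the Jacobian (total derivative) JPM = D PM(A^0, X^0) is an invertible linear map; (2) the operator norm of JPM^{−1} is at most C_5; (3) for every μ ∈ ℝ^{2d}, ‖JPM^{−1}(μ)‖ ≥ C_6 ‖μ‖; and (4) for every μ on the last coordinate axis L = {(0, ..., 0, t) : t ∈ ℝ} ⊂ ℝ^{2d}, the projection P_X of JPM^{−1}(μ) onto the node coordinates X satisfies ‖P_X(JPM^{−1}(μ))‖ ≥ C_7 ‖μ‖. -/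

import Mathlib

/-- The Prony mapping `PM : ℝ^d × ℝ^d → ℝ^{2d}`,
`PM(A, X) = (m_0(F_{A,X}), …, m_{2d−1}(F_{A,X}))` with
`m_k(F_{A,X}) = ∑ j, A j · (X j)^k`.  The domain carries the Euclidean (`L²`)
norm via `WithLp 2`. -/
noncomputable def Prony (d : ℕ)
    (p : WithLp 2 (EuclideanSpace ℝ (Fin d) × EuclideanSpace ℝ (Fin d))) :
    EuclideanSpace ℝ (Fin (2 * d)) :=
  WithLp.toLp 2 (fun k : Fin (2 * d) =>
    ∑ j, (WithLp.equiv 2 _ p).1 j * ((WithLp.equiv 2 _ p).2 j) ^ (k : ℕ))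

/-!
The `k`-th coordinate of the Jacobian at `(A, Y)`, applied to a tangent vector `(a, x)`, is
`ℓ(X^k)` for the confluent evaluation functional `ℓ(P) = ∑ⱼ (aⱼ P(Yⱼ) + Aⱼ xⱼ P'(Yⱼ))`. If all
these vanish, `ℓ` kills every polynomial of degree `< 2d`; testing it on `Lⱼ² (X - Yⱼ)` and on
`Lⱼ²`, with `Lⱼ` the Lagrange basis of the nodes, gives `Aⱼ xⱼ = 0` and then `aⱼ = 0`. So the
Jacobian is invertible when the nodes are distinct and the amplitudes nonzero. When `x = 0` and
only the last moment survives, `Lⱼ²` has degree `2d - 2` and still forces `a = 0`.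

The admissible parameters form a compact set. Minimising `‖J v‖`, and `‖v_X‖` over the closed cone
where `J v` lies on the last axis, over this set times the unit sphere gives positive constants;
together with a uniform bound on `‖J‖` they yield `C₅`, `C₆` and `C₇`.
-/

open Polynomial

namespace Polynomial

theorem linearMap_apply_eq_zero_of_natDegree_lt {R M : Type*} [CommSemiring R] [AddCommMonoid M] [Module R M]
    (ℓ : R[X] →ₗ[R] M) {N : ℕ} (h : ∀ k < N, ℓ (X ^ k) = 0) {P : R[X]} (hP : P.natDegree < N) :
    ℓ P = 0 := by
  rw [P.as_sum_range_C_mul_X_pow, map_sum]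
  refine Finset.sum_eq_zero fun i hi => ?_
  rw [C_mul', map_smul, h i (by grind), smul_zero]

end Polynomial

section ConfluentFunctional

variable {ι : Type*} [Fintype ι] {A Y a x : ι → ℝ}

noncomputable def confluentFunctional (A Y a x : ι → ℝ) : ℝ[X] →ₗ[ℝ] ℝ :=
  ∑ j, (a j • leval (Y j) + (A j * x j) • leval (Y j) ∘ₗ derivative)

theorem confluentFunctional_apply (P : ℝ[X]) :
    confluentFunctional A Y a x P =
      ∑ j, (a j * P.eval (Y j) + A j * x j * P.derivative.eval (Y j)) := by
  simp [confluentFunctional]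

theorem confluentFunctional_X_pow (k : ℕ) :
    confluentFunctional A Y a x (X ^ k) =
      ∑ j, (a j * Y j ^ k + k * A j * Y j ^ (k - 1) * x j) := by
  simp only [confluentFunctional_apply, derivative_X_pow, eval_mul, eval_C, eval_pow, eval_X]
  exact Finset.sum_congr rfl fun j _ => by ring

variable [DecidableEq ι] (hY : Function.Injective Y)
include hY

theorem confluentFunctional_basis_sq_mul (j : ι) (R : ℝ[X]) :
    confluentFunctional A Y a x (Lagrange.basis Finset.univ Y j ^ 2 * R) =
      a j * R.eval (Y j) + A j * x j * (2 * (Lagrange.basis Finset.univ Y j).derivative.eval (Y j) *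
        R.eval (Y j) + R.derivative.eval (Y j)) := by
  rw [confluentFunctional_apply, Finset.sum_eq_single j]
  · simp [Lagrange.eval_basis_self hY.injOn (Finset.mem_univ j), derivative_mul, derivative_sq]
  · intro i _ hij
    simp [Lagrange.eval_basis_of_ne hij.symm (Finset.mem_univ i), derivative_mul, derivative_sq]
  · simp

theorem confluentFunctional_basis_sq_mul_eq_zero {N : ℕ}
    (h : ∀ k < N, confluentFunctional A Y a x (X ^ k) = 0) (j : ι) {R : ℝ[X]}
    (hR : R.natDegree + 2 * Fintype.card ι ≤ N + 1) :
    confluentFunctional A Y a x (Lagrange.basis Finset.univ Y j ^ 2 * R) = 0 := by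
  refine linearMap_apply_eq_zero_of_natDegree_lt _ h ?_
  have hdeg : (Lagrange.basis Finset.univ Y j ^ 2 * R).natDegree ≤
      2 * (Fintype.card ι - 1) + R.natDegree := by
    grw [natDegree_mul_le, natDegree_pow_le, Lagrange.natDegree_basis hY.injOn (Finset.mem_univ j),
      Finset.card_univ]
  have := Fintype.card_pos_iff.2 ⟨j⟩
  omega

theorem eq_zero_of_confluentFunctional_X_pow_eq_zero (hA : ∀ j, A j ≠ 0)
    (h : ∀ k < 2 * Fintype.card ι, confluentFunctional A Y a x (X ^ k) = 0) : a = 0 ∧ x = 0 := by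
  have hx : x = 0 := funext fun j => by
    have := confluentFunctional_basis_sq_mul_eq_zero hY h j (R := X - C (Y j)) (by simp [add_comm])
    simp_all [confluentFunctional_basis_sq_mul hY]
  refine ⟨funext fun j => ?_, hx⟩
  have := confluentFunctional_basis_sq_mul_eq_zero hY h j (R := 1) (by simp)
  rw [confluentFunctional_basis_sq_mul hY] at this
  simpa [hx] using this

theorem eq_zero_of_confluentFunctional_zero_X_pow_eq_zero
    (h : ∀ k < 2 * Fintype.card ι - 1, confluentFunctional A Y a 0 (X ^ k) = 0) : a = 0 :=
  funext fun j => by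
    have := confluentFunctional_basis_sq_mul_eq_zero hY h j (R := 1) (by simp; omega)
    rw [confluentFunctional_basis_sq_mul hY] at this
    simpa using this

end ConfluentFunctional

theorem IsCompact.exists_pos_mul_norm_le {P E G : Type*} [TopologicalSpace P] [NormedAddCommGroup E]
    [NormedSpace ℝ E] [FiniteDimensional ℝ E] [NormedAddCommGroup G] [NormedSpace ℝ G]
    {K : Set P} (hK : IsCompact K) {f : P → E →L[ℝ] G} (hf : Continuous f) {Z : Set (P × E)}
    (hZ : IsClosed Z) (hZ_smul : ∀ p v, (p, v) ∈ Z → ∀ t : ℝ, (p, t • v) ∈ Z)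
    (hf_ne : ∀ p ∈ K, ∀ v ≠ 0, (p, v) ∈ Z → f p v ≠ 0) :
    ∃ c > 0, ∀ p ∈ K, ∀ v, (p, v) ∈ Z → c * ‖v‖ ≤ ‖f p v‖ := by
  have hT : IsCompact (Z ∩ K ×ˢ Metric.sphere 0 1) :=
    (hK.prod (isCompact_sphere 0 1)).inter_left hZ
  have hcont : Continuous fun q : P × E => ‖f q.1 q.2‖ :=
    ((hf.comp continuous_fst).clm_apply continuous_snd).norm
  obtain ⟨c, hc, hcT⟩ := hT.exists_forall_le' hcont.continuousOn (a := 0) fun q ⟨hqZ, hqK, hq1⟩ =>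
    norm_pos_iff.2 (hf_ne q.1 hqK q.2 (ne_zero_of_mem_unit_sphere ⟨q.2, hq1⟩) hqZ)
  refine ⟨c, hc, fun p hp v hv => ?_⟩
  rcases eq_or_ne v 0 with rfl | hv0
  · simp
  have hvn : 0 < ‖v‖ := norm_pos_iff.2 hv0
  have := hcT (p, ‖v‖⁻¹ • v) ⟨hZ_smul p v hv _, hp, by simp [norm_smul, hvn.ne']⟩
  simp only [map_smul, norm_smul, norm_inv, norm_norm] at this
  rwa [le_inv_mul_iff₀ hvn, mul_comm] at this

theorem ContinuousLinearEquiv.norm_symm_le_inv {E F : Type*} [NormedAddCommGroup E]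
    [NormedSpace ℝ E] [NormedAddCommGroup F] [NormedSpace ℝ F] (e : E ≃L[ℝ] F) {c : ℝ}
    (hc : 0 < c) (h : ∀ v, c * ‖v‖ ≤ ‖e v‖) : ‖(e.symm : F →L[ℝ] E)‖ ≤ c⁻¹ :=
  ContinuousLinearMap.opNorm_le_bound _ (inv_nonneg.2 hc.le) fun μ => by
    rw [inv_mul_eq_div, le_div_iff₀ hc, mul_comm]
    simpa using h (e.symm μ)

section LastAxis

def lastAxis (n : ℕ) : Set (EuclideanSpace ℝ (Fin n)) := {μ | ∀ k : Fin n, (k : ℕ) ≠ n - 1 → μ k = 0}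

theorem isClosed_lastAxis (n : ℕ) : IsClosed (lastAxis n) := by
  simp only [lastAxis, Set.ofPred_forall]
  exact isClosed_iInter fun k => isClosed_iInter fun _ =>
    isClosed_eq (EuclideanSpace.proj k).continuous continuous_const

theorem smul_mem_lastAxis {n : ℕ} {μ : EuclideanSpace ℝ (Fin n)} (hμ : μ ∈ lastAxis n) (t : ℝ) :
    t • μ ∈ lastAxis n := fun k hk => by simp [hμ k hk]

end LastAxis

section Prony

abbrev ParamSpace (d : ℕ) := WithLp 2 (EuclideanSpace ℝ (Fin d) × EuclideanSpace ℝ (Fin d))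

variable {d : ℕ}

-- Without this shortcut, instance search for it times out.
instance : ContinuousSMul ℝ (ParamSpace d) := IsBoundedSMul.continuousSMul

noncomputable def ampCoord (j : Fin d) : ParamSpace d →L[ℝ] ℝ :=
  EuclideanSpace.proj j ∘L WithLp.fstL 2 ℝ _ _

noncomputable def nodeCoord (j : Fin d) : ParamSpace d →L[ℝ] ℝ :=
  EuclideanSpace.proj j ∘L WithLp.sndL 2 ℝ _ _

@[simp] theorem ampCoord_apply (j : Fin d) (p : ParamSpace d) : ampCoord j p = p.fst j := rfl

@[simp] theorem nodeCoord_apply (j : Fin d) (p : ParamSpace d) : nodeCoord j p = p.snd j := rfl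

theorem prony_apply (p : ParamSpace d) (k : Fin (2 * d)) :
    Prony d p k = ∑ j, ampCoord j p * nodeCoord j p ^ (k : ℕ) := rfl

theorem contDiff_prony : ContDiff ℝ 1 (Prony d) :=
  contDiff_piLp' _ fun k => by
    simp only [prony_apply]
    exact ContDiff.sum fun j _ => (ampCoord j).contDiff.mul ((nodeCoord j).contDiff.pow _)

theorem fderiv_prony_apply (p v : ParamSpace d) (k : Fin (2 * d)) :
    fderiv ℝ (Prony d) p v k = confluentFunctional p.fst p.snd v.fst v.snd (X ^ (k : ℕ)) := by
  have hk : HasFDerivAt (fun q => Prony d q k) (EuclideanSpace.proj k ∘L fderiv ℝ (Prony d) p) p :=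
    (EuclideanSpace.proj (𝕜 := ℝ) k).hasFDerivAt.comp p
      ((contDiff_prony.differentiable one_ne_zero) p).hasFDerivAt
  have hk' := HasFDerivAt.fun_sum (u := Finset.univ) (x := p)
    fun j _ => (ampCoord j).hasFDerivAt.fun_mul ((nodeCoord j).hasFDerivAt.pow (k : ℕ))
  rw [show (fun q => ∑ j, ampCoord j q * nodeCoord j q ^ (k : ℕ)) = fun q => Prony d q k
    from funext fun q => (prony_apply q k).symm] at hk'
  have := DFunLike.congr_fun (hk.unique hk') v
  simp only [ContinuousLinearMap.comp_apply, sum_apply, add_apply, smul_apply, smul_eq_mul,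
    nsmul_eq_mul, ampCoord_apply, nodeCoord_apply] at this
  rw [confluentFunctional_X_pow]
  exact this.trans (Finset.sum_congr rfl fun j _ => by ring)

theorem ParamSpace.ext {p q : ParamSpace d} (hA : ∀ j, p.fst j = q.fst j)
    (hX : ∀ j, p.snd j = q.snd j) : p = q :=
  WithLp.ofLp_injective _ <| Prod.ext (PiLp.ext hA) (PiLp.ext hX)

theorem injective_fderiv_prony {p : ParamSpace d} (hX : Function.Injective p.snd)
    (hA : ∀ j, p.fst j ≠ 0) : Function.Injective (fderiv ℝ (Prony d) p) := by
  refine (injective_iff_map_eq_zero _).2 fun v hv => ?_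
  obtain ⟨ha, hx⟩ := eq_zero_of_confluentFunctional_X_pow_eq_zero hX hA fun k hk => by
    simpa [hv] using (fderiv_prony_apply p v ⟨k, by simpa using hk⟩).symm
  exact ParamSpace.ext (congrFun ha) (congrFun hx)

theorem eq_zero_of_fderiv_prony_mem_lastAxis {p : ParamSpace d} (hX : Function.Injective p.snd)
    {v : ParamSpace d} (hv : v.snd = 0) (h : fderiv ℝ (Prony d) p v ∈ lastAxis (2 * d)) :
    v = 0 := by
  have ha := eq_zero_of_confluentFunctional_zero_X_pow_eq_zero hX (A := p.fst) (a := v.fst)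
    fun k hk => by
      simpa [fderiv_prony_apply, hv] using h ⟨k, by rw [Fintype.card_fin] at hk; omega⟩
        (by rw [Fintype.card_fin] at hk; simp; omega)
  exact ParamSpace.ext (by simpa using congrFun ha) (by simp [hv])

def admissibleParams (m M ρ : ℝ) (d : ℕ) : Set (ParamSpace d) :=
  {p | (∀ j, p.snd j ∈ Set.Icc (-(1 / 2) : ℝ) (1 / 2)) ∧
    (∀ i j : Fin d, i ≠ j → ρ ≤ |p.snd i - p.snd j|) ∧ ∀ j, m ≤ |p.fst j| ∧ |p.fst j| ≤ M}

variable {m M ρ : ℝ}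

theorem isClosed_admissibleParams : IsClosed (admissibleParams m M ρ d) := by
  have hA := fun j => (ampCoord (d := d) j).continuous
  have hX := fun j => (nodeCoord (d := d) j).continuous
  simp only [admissibleParams, Set.ofPred_and, Set.ofPred_forall]
  refine .inter (isClosed_iInter fun j => ?_) (.inter (isClosed_iInter fun i =>
    isClosed_iInter fun j => isClosed_iInter fun _ => ?_) (isClosed_iInter fun j => ?_))
  · exact isClosed_Icc.preimage (hX j)
  · exact isClosed_le continuous_const ((hX i).sub (hX j)).abs
  · exact (isClosed_le continuous_const (hA j).abs).inter (isClosed_le (hA j).abs continuous_const)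

theorem isCompact_admissibleParams : IsCompact (admissibleParams m M ρ d) := by
  let e : ParamSpace d ≃L[ℝ] (Fin d → ℝ) × (Fin d → ℝ) :=
    (WithLp.prodContinuousLinearEquiv 2 ℝ _ _).trans
      ((PiLp.continuousLinearEquiv 2 ℝ _).prodCongr (PiLp.continuousLinearEquiv 2 ℝ _))
  have hbox : IsCompact (e ⁻¹' (Set.univ.pi (fun _ => Set.Icc (-M) M) ×ˢ
      Set.univ.pi (fun _ => Set.Icc (-(1 / 2)) (1 / 2)))) :=
    e.toHomeomorph.isCompact_preimage.2 <|
      (isCompact_univ_pi fun _ => isCompact_Icc).prod (isCompact_univ_pi fun _ => isCompact_Icc)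
  refine hbox.of_isClosed_subset isClosed_admissibleParams fun p ⟨hX, _, hA⟩ => ?_
  exact ⟨fun j _ => abs_le.1 (hA j).2, fun j _ => hX j⟩

theorem injective_snd_of_mem_admissibleParams (hρ : 0 < ρ) {p : ParamSpace d}
    (hp : p ∈ admissibleParams m M ρ d) : Function.Injective p.snd := fun i j hij => by
  by_contra hne
  have := hp.2.1 i j hne
  simp [hij] at this
  linarith

theorem fst_ne_zero_of_mem_admissibleParams (hm : 0 < m) {p : ParamSpace d}
    (hp : p ∈ admissibleParams m M ρ d) (j : Fin d) : p.fst j ≠ 0 := fun h => by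
  have := (hp.2.2 j).1
  simp [h] at this
  linarith

theorem exists_equiv_eq_fderiv_prony {p : ParamSpace d} (hX : Function.Injective p.snd)
    (hA : ∀ j, p.fst j ≠ 0) :
    ∃ J : ParamSpace d ≃L[ℝ] EuclideanSpace ℝ (Fin (2 * d)),
      (J : ParamSpace d →L[ℝ] EuclideanSpace ℝ (Fin (2 * d))) = fderiv ℝ (Prony d) p :=
  ⟨(LinearMap.linearEquivOfInjective _ (injective_fderiv_prony hX hA)
    (by rw [(WithLp.linearEquiv 2 ℝ _).finrank_eq, Module.finrank_prod, finrank_euclideanSpace_fin,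
      finrank_euclideanSpace_fin, two_mul])).toContinuousLinearEquiv, rfl⟩

theorem exists_norm_fderiv_prony_le (m M ρ : ℝ) (d : ℕ) :
    ∃ C > 0, ∀ p ∈ admissibleParams m M ρ d, ‖fderiv ℝ (Prony d) p‖ ≤ C := by
  obtain ⟨C, hC⟩ := isCompact_admissibleParams.exists_bound_of_continuousOn
    (contDiff_prony.continuous_fderiv one_ne_zero).continuousOn
  exact ⟨max C 1, by positivity, fun p hp => (hC p hp).trans (le_max_left _ _)⟩

theorem exists_pos_mul_norm_le_norm_fderiv_prony (hm : 0 < m) (hρ : 0 < ρ) :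
    ∃ c > 0, ∀ p ∈ admissibleParams m M ρ d, ∀ v, c * ‖v‖ ≤ ‖fderiv ℝ (Prony d) p v‖ := by
  obtain ⟨c, hc, h⟩ := isCompact_admissibleParams.exists_pos_mul_norm_le
    (contDiff_prony.continuous_fderiv one_ne_zero) isClosed_univ (by simp)
    fun p hp v hv _ => (map_ne_zero_iff _ (injective_fderiv_prony
      (injective_snd_of_mem_admissibleParams hρ hp) (fst_ne_zero_of_mem_admissibleParams hm hp))).2 hv
  exact ⟨c, hc, fun p hp v => h p hp v trivial⟩

theorem exists_pos_mul_norm_le_norm_snd (hρ : 0 < ρ) :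
    ∃ c > 0, ∀ p ∈ admissibleParams m M ρ d, ∀ v : ParamSpace d,
      fderiv ℝ (Prony d) p v ∈ lastAxis (2 * d) → c * ‖v‖ ≤ ‖v.snd‖ := by
  have hJ : Continuous fun q : ParamSpace d × ParamSpace d => fderiv ℝ (Prony d) q.1 q.2 :=
    ((contDiff_prony.continuous_fderiv one_ne_zero).comp continuous_fst).clm_apply continuous_snd
  exact isCompact_admissibleParams.exists_pos_mul_norm_le (f := fun _ => WithLp.sndL 2 ℝ _ _)
    continuous_const ((isClosed_lastAxis _).preimage hJ)
    (fun p v hv t => by simpa using smul_mem_lastAxis hv t)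
    fun p hp v hv0 hv hsnd => hv0 <| eq_zero_of_fderiv_prony_mem_lastAxis
      (injective_snd_of_mem_admissibleParams hρ hp) hsnd hv

end Prony

theorem prony_jacobian_bounds_general (m M ρ : ℝ) (d : ℕ)
    (hm : 0 < m) (hρ : 0 < ρ) :
    ∃ C₅ > (0 : ℝ), ∃ C₆ > (0 : ℝ), ∃ C₇ > (0 : ℝ),
      ∀ A0 X0 : EuclideanSpace ℝ (Fin d),
        (∀ j, X0 j ∈ Set.Icc (-(1 / 2) : ℝ) (1 / 2)) →
        (∀ i j : Fin d, i ≠ j → ρ ≤ |X0 i - X0 j|) →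
        (∀ j, m ≤ |A0 j| ∧ |A0 j| ≤ M) →
        ∃ J : WithLp 2 (EuclideanSpace ℝ (Fin d) × EuclideanSpace ℝ (Fin d)) ≃L[ℝ]
            EuclideanSpace ℝ (Fin (2 * d)),
          (J : WithLp 2 (EuclideanSpace ℝ (Fin d) × EuclideanSpace ℝ (Fin d)) →L[ℝ]
              EuclideanSpace ℝ (Fin (2 * d))) =
            fderiv ℝ (Prony d) ((WithLp.equiv 2 _).symm (A0, X0)) ∧
          ‖(J.symm : EuclideanSpace ℝ (Fin (2 * d)) →L[ℝ]
              WithLp 2 (EuclideanSpace ℝ (Fin d) × EuclideanSpace ℝ (Fin d)))‖ ≤ C₅ ∧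
          (∀ μ : EuclideanSpace ℝ (Fin (2 * d)), C₆ * ‖μ‖ ≤ ‖J.symm μ‖) ∧
          (∀ μ : EuclideanSpace ℝ (Fin (2 * d)),
            (∀ k : Fin (2 * d), (k : ℕ) ≠ 2 * d - 1 → μ k = 0) →
            C₇ * ‖μ‖ ≤ ‖(WithLp.equiv 2 _ (J.symm μ)).2‖) := by
  obtain ⟨c, hc, hlow⟩ := exists_pos_mul_norm_le_norm_fderiv_prony (M := M) (d := d) hm hρ
  obtain ⟨C, hC, hup⟩ := exists_norm_fderiv_prony_le m M ρ d
  obtain ⟨c', hc', haxis⟩ := exists_pos_mul_norm_le_norm_snd (m := m) (M := M) (d := d) hρ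
  refine ⟨c⁻¹, inv_pos.2 hc, C⁻¹, inv_pos.2 hC, c' * C⁻¹, by positivity,
    fun A0 X0 hX hsep hA => ?_⟩
  have hp : (WithLp.equiv 2 _).symm (A0, X0) ∈ admissibleParams m M ρ d := ⟨hX, hsep, hA⟩
  obtain ⟨J, hJ⟩ := exists_equiv_eq_fderiv_prony (injective_snd_of_mem_admissibleParams hρ hp)
    (fst_ne_zero_of_mem_admissibleParams hm hp)
  have hJv (v) : J v = fderiv ℝ (Prony d) ((WithLp.equiv 2 _).symm (A0, X0)) v := by rw [← hJ]; rfl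
  have hsymm (μ) : C⁻¹ * ‖μ‖ ≤ ‖J.symm μ‖ := by
    rw [inv_mul_le_iff₀ hC]
    have := (fderiv ℝ (Prony d) _).le_of_opNorm_le (hup _ hp) (J.symm μ)
    rwa [← hJv, J.apply_symm_apply] at this
  refine ⟨J, hJ, J.norm_symm_le_inv hc fun v => hJv v ▸ hlow _ hp v, hsymm, fun μ hμ => ?_⟩
  calc c' * C⁻¹ * ‖μ‖ ≤ c' * ‖J.symm μ‖ := by rw [mul_assoc]; gcongr; exact hsymm μ
    _ ≤ ‖(J.symm μ).snd‖ := haxis _ hp _ fun k hk => by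
      rw [← hJv, J.apply_symm_apply]
      exact hμ k hk

/-- for every `0 < m ≤ M`, `d ≥ 1`, `ρ > 0` there are positive
constants `C₅, C₆, C₇` depending only on `m, M, d, ρ` such that at every point
`(A⁰, X⁰)` with nodes in `[−1/2, 1/2]` pairwise `ρ`-separated and amplitudes in
`[m, M]` in absolute value: the Jacobian `JPM = D PM(A⁰,X⁰)` is invertible,
`‖JPM⁻¹‖ ≤ C₅`, `‖JPM⁻¹(μ)‖ ≥ C₆‖μ‖` for every `μ`, and for every `μ` on the
last coordinate axis the projection onto the node coordinates satisfies
`‖P_X(JPM⁻¹(μ))‖ ≥ C₇‖μ‖`. -/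
theorem prony_jacobian_bounds (m M ρ : ℝ) (d : ℕ)
    (hm : 0 < m) (hmM : m ≤ M) (hd : 1 ≤ d) (hρ : 0 < ρ) :
    ∃ C₅ > (0 : ℝ), ∃ C₆ > (0 : ℝ), ∃ C₇ > (0 : ℝ),
      ∀ A0 X0 : EuclideanSpace ℝ (Fin d),
        (∀ j, X0 j ∈ Set.Icc (-(1 / 2) : ℝ) (1 / 2)) →
        (∀ i j : Fin d, i ≠ j → ρ ≤ |X0 i - X0 j|) →
        (∀ j, m ≤ |A0 j| ∧ |A0 j| ≤ M) →
        ∃ J : WithLp 2 (EuclideanSpace ℝ (Fin d) × EuclideanSpace ℝ (Fin d)) ≃L[ℝ]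
            EuclideanSpace ℝ (Fin (2 * d)),
          (J : WithLp 2 (EuclideanSpace ℝ (Fin d) × EuclideanSpace ℝ (Fin d)) →L[ℝ]
              EuclideanSpace ℝ (Fin (2 * d))) =
            fderiv ℝ (Prony d) ((WithLp.equiv 2 _).symm (A0, X0)) ∧
          ‖(J.symm : EuclideanSpace ℝ (Fin (2 * d)) →L[ℝ]
              WithLp 2 (EuclideanSpace ℝ (Fin d) × EuclideanSpace ℝ (Fin d)))‖ ≤ C₅ ∧
          (∀ μ : EuclideanSpace ℝ (Fin (2 * d)), C₆ * ‖μ‖ ≤ ‖J.symm μ‖) ∧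
          (∀ μ : EuclideanSpace ℝ (Fin (2 * d)),
            (∀ k : Fin (2 * d), (k : ℕ) ≠ 2 * d - 1 → μ k = 0) →
            C₇ * ‖μ‖ ≤ ‖(WithLp.equiv 2 _ (J.symm μ)).2‖) :=
  prony_jacobian_bounds_general m M ρ d hm hρ
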